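/- Let C be a pointed, spanning polyhedral cone in E = ℝⁿ and let D ⊆ E be a downset. Then D is the union of the coprincipal downsets determined by its cogenerators: D = ⋃ (a + τ − σ° − C), where the union runs over all pairs of faces τ ⊆ σ of C and all points a ∈ E that are cogenerators of D along τ with nadir σ. -/

import Mathlib

open Pointwise

/-- A polyhedral cone in `ℝⁿ`: an intersection of finitely many closed linear half-spaces. -/
def IsPolyCone {n : ℕ} (C : Set (Fin n → ℝ)) : Prop :=
  ∃ (m : ℕ) (ℓ : Fin m → ((Fin n → ℝ) →ₗ[ℝ] ℝ)), C = {x | ∀ i, 0 ≤ ℓ i x}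

/-- A face of a cone `C`: a subset of `C` containing `0`, closed under addition, and such
that whenever `x, y ∈ C` and `x + y` lies in the subset, both `x` and `y` do. -/
def IsConeFace {M : Type*} [AddCommMonoid M] (σ C : Set M) : Prop :=
  σ ⊆ C ∧ (0 : M) ∈ σ ∧ (∀ x ∈ σ, ∀ y ∈ σ, x + y ∈ σ) ∧
    ∀ x ∈ C, ∀ y ∈ C, x + y ∈ σ → x ∈ σ ∧ y ∈ σ

/-- A downset for the partial order `x ≼ y ↔ y - x ∈ C`. -/
def IsDownset {n : ℕ} (C D : Set (Fin n → ℝ)) : Prop :=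
  ∀ x y : Fin n → ℝ, y ∈ D → y - x ∈ C → x ∈ D

/-- The upper boundary downset `D^σ = {a | a - σ° ⊆ D}`. -/
def upSet {n : ℕ} (D σ : Set (Fin n → ℝ)) : Set (Fin n → ℝ) :=
  {a | ∀ s ∈ intrinsicInterior ℝ σ, a - s ∈ D}

/-- `a` is a cogenerator of the downset `D` along the face `τ` with nadir `σ`:
`(a + C) ∩ D^σ = a + τ` and no face `σ''` with `τ ⊆ σ'' ⊊ σ` satisfies `a - σ''° ⊆ D`. -/
def IsCogen {n : ℕ} (C D τ σ : Set (Fin n → ℝ)) (a : Fin n → ℝ) : Prop :=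
  (({a} + C) ∩ upSet D σ = {a} + τ) ∧
  ∀ σ'' : Set (Fin n → ℝ), IsConeFace σ'' C → τ ⊆ σ'' → σ'' ⊂ σ →
    ¬ (∀ s ∈ intrinsicInterior ℝ σ'', a - s ∈ D)

/-- A `σ`-vicinity of a point `p` of `E ⧸ span τ`: the image under the quotient map of
`u + σ° + C` for some `u` admitting a representative `w` of `p` with `w - u ∈ σ°`. -/
def IsVic {n : ℕ} (C σ τ : Set (Fin n → ℝ))
    (p : (Fin n → ℝ) ⧸ Submodule.span ℝ τ)
    (V : Set ((Fin n → ℝ) ⧸ Submodule.span ℝ τ)) : Prop :=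
  ∃ u w : Fin n → ℝ, (Submodule.span ℝ τ).mkQ w = p ∧
    w - u ∈ intrinsicInterior ℝ σ ∧
    V = (Submodule.span ℝ τ).mkQ '' ({u} + intrinsicInterior ℝ σ + C)

/-!
Write `C = {x | ∀ i, 0 ≤ ℓ i x}`. Every face of `C` is cut out by the functionals vanishing on
it, and `y ∈ σ° + C` holds exactly when every `ℓ i` vanishing at `y` vanishes on `σ`; in particular
there are only finitely many faces and finitely many zero patterns.

Given `x ∈ D`, take a face `σ₀` maximal such that `x ∈ a - σ₀° - C` for some `a ∈ D^σ₀`.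
Maximality forces every `c ∈ C` with `a + c ∈ D^σ₀` into `σ₀`. Moving `a` up inside `D^σ₀` (to the
end of a bounded ray, or along a direction that breaks additivity) strictly shrinks the finite set
of zero patterns of these directions, so eventually they form a face `τ`. Then take a minimal face
`σ ⊇ τ` with `a + τ ⊆ D^σ`, and push `a` along `τ` until it leaves `D^σ''` for every face `σ''`
with `τ ⊆ σ'' ⊊ σ`: the result is a cogenerator along `τ` with nadir `σ` whose coprincipal downset
contains `x`.
-/

open Filter Topology

section PolyCone

variable {E : Type*} [NormedAddCommGroup E] [NormedSpace ℝ E] {ι : Type*}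

def polyCone (ℓ : ι → E →ₗ[ℝ] ℝ) : Set E := {x | ∀ i, 0 ≤ ℓ i x}

def polyFace (ℓ : ι → E →ₗ[ℝ] ℝ) (J : Set ι) : Set E :=
  {x ∈ polyCone ℓ | ∀ i ∈ J, ℓ i x = 0}

def vanishingIdx (ℓ : ι → E →ₗ[ℝ] ℝ) (σ : Set E) : Set ι :=
  {i | ∀ x ∈ σ, ℓ i x = 0}

def zeroIdx (ℓ : ι → E →ₗ[ℝ] ℝ) (x : E) : Set ι := {i | ℓ i x = 0}

variable {ℓ : ι → E →ₗ[ℝ] ℝ} {σ ψ : Set E} {c d x y : E}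

lemma zero_mem_polyCone : (0 : E) ∈ polyCone ℓ := fun i => by simp

lemma add_mem_polyCone (hx : x ∈ polyCone ℓ) (hy : y ∈ polyCone ℓ) :
    x + y ∈ polyCone ℓ :=
  fun i => by simpa using add_nonneg (hx i) (hy i)

lemma smul_mem_polyCone {t : ℝ} (ht : 0 ≤ t) (hx : x ∈ polyCone ℓ) :
    t • x ∈ polyCone ℓ :=
  fun i => by simpa using mul_nonneg ht (hx i)

lemma zeroIdx_add (hx : x ∈ polyCone ℓ) (hy : y ∈ polyCone ℓ) :
    zeroIdx ℓ (x + y) = zeroIdx ℓ x ∩ zeroIdx ℓ y := by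
  ext i
  simp only [zeroIdx, Set.mem_ofPred_eq, Set.mem_inter_iff, map_add]
  constructor
  · intro h
    constructor <;> linarith [hx i, hy i]
  · rintro ⟨h1, h2⟩
    rw [h1, h2, add_zero]

lemma subset_vanishingIdx_polyFace (J : Set ι) : J ⊆ vanishingIdx ℓ (polyFace ℓ J) :=
  fun _ hi _ hx => hx.2 _ hi

lemma vanishingIdx_anti (h : σ ⊆ ψ) : vanishingIdx ℓ ψ ⊆ vanishingIdx ℓ σ :=
  fun _ hi x hx => hi x (h hx)

lemma isConeFace_polyFace (J : Set ι) : IsConeFace (polyFace ℓ J) (polyCone ℓ) := by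
  refine ⟨fun x hx => hx.1, ⟨zero_mem_polyCone, fun i _ => map_zero _⟩,
    fun x hx y hy => ⟨add_mem_polyCone hx.1 hy.1, fun i hi => by simp [hx.2 i hi, hy.2 i hi]⟩,
    fun x hx y hy hxy => ?_⟩
  have h i (hi : i ∈ J) : ℓ i x = 0 ∧ ℓ i y = 0 := by
    have := hxy.2 i hi
    rw [map_add] at this
    constructor <;> linarith [hx i, hy i]
  exact ⟨⟨hx, fun i hi => (h i hi).1⟩, ⟨hy, fun i hi => (h i hi).2⟩⟩

lemma isConeFace_singleton_zero {M : Type*} [AddCommGroup M] {C : Set M} (hC : C ∩ -C = {0}) :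
    IsConeFace {0} C := by
  have h0 : (0 : M) ∈ C := (hC.symm.subset rfl).1
  refine ⟨by simpa using h0, rfl, fun x hx y hy => by simp_all, fun x hx y hy hxy => ?_⟩
  rw [Set.mem_singleton_iff, add_eq_zero_iff_eq_neg] at hxy
  have hx' : x ∈ C ∩ -C := ⟨hx, by simpa [hxy] using hy⟩
  rw [hC, Set.mem_singleton_iff] at hx'
  subst hx'
  simp_all

lemma exists_pos_sub_smul_mem_polyCone [Finite ι] (hc : c ∈ polyCone ℓ) (d : E)
    (h : zeroIdx ℓ c ⊆ zeroIdx ℓ d) : ∃ ε > (0 : ℝ), c - ε • d ∈ polyCone ℓ := by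
  have : ∀ᶠ ε in 𝓝[>] (0 : ℝ), ∀ i, 0 ≤ ℓ i (c - ε • d) := by
    refine nhdsWithin_le_nhds (eventually_all.2 fun i => ?_)
    simp only [map_sub, map_smul, smul_eq_mul]
    rcases (hc i).eq_or_lt with h0 | hpos
    · have hd : ℓ i d = 0 := h (a := i) h0.symm
      exact Eventually.of_forall fun ε => by simp [← h0, hd]
    · have : Tendsto (fun ε : ℝ => ℓ i c - ε * ℓ i d) (𝓝 0) (𝓝 (ℓ i c)) := by
        simpa using ((continuous_id.mul continuous_const).tendsto (0 : ℝ)).const_sub (ℓ i c)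
      exact (this.eventually (lt_mem_nhds hpos)).mono fun _ h => h.le
  obtain ⟨ε, hε, hpos⟩ := (this.and self_mem_nhdsWithin).exists
  exact ⟨ε, hpos, hε⟩

lemma exists_smul_sub_mem_polyCone [Finite ι] (hc : c ∈ polyCone ℓ)
    (h : zeroIdx ℓ c ⊆ zeroIdx ℓ d) : ∃ t : ℝ, t • c - d ∈ polyCone ℓ := by
  obtain ⟨ε, hε, hcd⟩ := exists_pos_sub_smul_mem_polyCone hc d h
  refine ⟨ε⁻¹, ?_⟩
  simpa [smul_sub, smul_smul, inv_mul_cancel₀ hε.ne'] using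
    smul_mem_polyCone (inv_nonneg.2 hε.le) hcd

lemma exists_pos_sub_smul_mem_intrinsicInterior {s v : E} (hs : s ∈ intrinsicInterior ℝ σ)
    (h0 : (0 : E) ∈ σ) (hv : v ∈ σ) :
    ∃ ε > (0 : ℝ), s - ε • v ∈ intrinsicInterior ℝ σ := by
  obtain ⟨z, hz, rfl⟩ := mem_intrinsicInterior.1 hs
  have hmem (ε : ℝ) : (z : E) - ε • v ∈ affineSpan ℝ σ := by
    simpa [sub_eq_add_neg, add_comm] using (affineSpan ℝ σ).smul_vsub_vadd_mem ε
      (subset_affineSpan ℝ σ h0) (subset_affineSpan ℝ σ hv) z.2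
  let f : ℝ → affineSpan ℝ σ := fun ε => ⟨z - ε • v, hmem ε⟩
  have hf : Continuous f :=
    (continuous_const.sub (continuous_id.smul continuous_const)).subtype_mk _
  have : ∀ᶠ ε in 𝓝[>] (0 : ℝ), f ε ∈ interior (Subtype.val ⁻¹' σ) :=
    nhdsWithin_le_nhds <| hf.continuousAt.preimage_mem_nhds <| by
      simpa [f] using isOpen_interior.mem_nhds hz
  obtain ⟨ε, hε, hpos⟩ := (this.and self_mem_nhdsWithin).exists
  exact ⟨ε, hpos, mem_intrinsicInterior.2 ⟨f ε, hε, rfl⟩⟩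

namespace IsConeFace

variable (hσ : IsConeFace σ (polyCone ℓ))
include hσ

lemma smul_mem {t : ℝ} (hx : x ∈ σ) (ht : 0 ≤ t) : t • x ∈ σ := by
  have hnsmul (k : ℕ) : k • x ∈ σ := by
    induction k with
    | zero => simpa using hσ.2.1
    | succ k ih => rw [succ_nsmul]; exact hσ.2.2.1 _ ih _ hx
  obtain ⟨k, hk⟩ := exists_nat_ge t
  refine (hσ.2.2.2 _ (smul_mem_polyCone ht (hσ.1 hx)) _
    (smul_mem_polyCone (sub_nonneg.2 hk) (hσ.1 hx)) ?_).1
  rw [← add_smul, add_sub_cancel, Nat.cast_smul_eq_nsmul]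
  exact hnsmul k

lemma convex : Convex ℝ σ :=
  fun _ hx _ hy _ _ ha hb _ => hσ.2.2.1 _ (hσ.smul_mem hx ha) _ (hσ.smul_mem hy hb)

lemma zeroIdx_subset_vanishingIdx (hy : y ∈ intrinsicInterior ℝ σ) :
    zeroIdx ℓ y ⊆ vanishingIdx ℓ σ := by
  intro i hi w hw
  obtain ⟨ε, hε, hyw⟩ := exists_pos_sub_smul_mem_intrinsicInterior hy hσ.2.1 hw
  have h1 := hσ.1 (intrinsicInterior_subset hyw) i
  have h2 := hσ.1 hw i
  have hi' : ℓ i y = 0 := hi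
  simp only [map_sub, map_smul, smul_eq_mul, hi'] at h1
  nlinarith

variable [FiniteDimensional ℝ E] [Finite ι]

lemma eq_polyFace : σ = polyFace ℓ (vanishingIdx ℓ σ) := by
  refine subset_antisymm (fun x hx => ⟨hσ.1 hx, fun i hi => hi x hx⟩) fun y hy => ?_
  obtain ⟨v, hv⟩ := Set.Nonempty.intrinsicInterior hσ.convex ⟨0, hσ.2.1⟩
  have hvσ := intrinsicInterior_subset hv
  obtain ⟨ε, hε, hvy⟩ := exists_pos_sub_smul_mem_polyCone (hσ.1 hvσ) y
    fun i hi => hy.2 i (hσ.zeroIdx_subset_vanishingIdx hv hi)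
  have hεy : ε • y ∈ σ :=
    (hσ.2.2.2 _ hvy _ (smul_mem_polyCone hε.le hy.1) (by rwa [sub_add_cancel])).2
  simpa [smul_smul, inv_mul_cancel₀ hε.ne'] using hσ.smul_mem hεy (inv_nonneg.2 hε.le)

lemma mem_intrinsicInterior_iff :
    y ∈ intrinsicInterior ℝ σ ↔ y ∈ σ ∧ zeroIdx ℓ y ⊆ vanishingIdx ℓ σ := by
  refine ⟨fun hy => ⟨intrinsicInterior_subset hy, hσ.zeroIdx_subset_vanishingIdx hy⟩,
    fun ⟨hyσ, hy⟩ => ?_⟩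
  set U : Set E := ⋂ i ∈ (vanishingIdx ℓ σ)ᶜ, {z | 0 < ℓ i z}
  have hU : IsOpen U := (Set.toFinite _).isOpen_biInter fun i _ =>
    isOpen_lt continuous_const (ℓ i).continuous_of_finiteDimensional
  have hUσ : Subtype.val ⁻¹' U ⊆ (Subtype.val ⁻¹' σ : Set (affineSpan ℝ σ)) := by
    rintro ⟨z, hz⟩ hzU
    have hvan : ∀ i ∈ vanishingIdx ℓ σ, ℓ i z = 0 := fun i hi =>
      (Submodule.span_le (p := LinearMap.ker (ℓ i))).2 (fun x hx => hi x hx)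
        (affineSpan_le_toAffineSubspace_span hz)
    show z ∈ σ
    rw [hσ.eq_polyFace]
    refine ⟨fun i => ?_, hvan⟩
    by_cases hi : i ∈ vanishingIdx ℓ σ
    · exact (hvan i hi).ge
    · exact (Set.mem_iInter₂.1 hzU i hi).le
  refine mem_intrinsicInterior.2 ⟨⟨y, subset_affineSpan ℝ σ hyσ⟩,
    interior_maximal hUσ (hU.preimage continuous_subtype_val) ?_, rfl⟩
  simp only [Set.mem_preimage, U, Set.mem_iInter]
  intro i hi
  exact (hσ.1 hyσ i).lt_of_ne' fun h => hi (hy h)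

lemma mem_intrinsicInterior_add_polyCone_iff :
    y ∈ intrinsicInterior ℝ σ + polyCone ℓ ↔
      y ∈ polyCone ℓ ∧ zeroIdx ℓ y ⊆ vanishingIdx ℓ σ := by
  constructor
  · rintro ⟨s, hs, c, hc, rfl⟩
    refine ⟨add_mem_polyCone (hσ.1 (intrinsicInterior_subset hs)) hc, fun i hi => ?_⟩
    rw [zeroIdx_add (hσ.1 (intrinsicInterior_subset hs)) hc] at hi
    exact hσ.zeroIdx_subset_vanishingIdx hs hi.1
  · rintro ⟨hyC, hy⟩
    obtain ⟨v, hv⟩ := Set.Nonempty.intrinsicInterior hσ.convex ⟨0, hσ.2.1⟩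
    have hvσ := hσ.mem_intrinsicInterior_iff.1 hv
    obtain ⟨ε, hε, hyv⟩ := exists_pos_sub_smul_mem_polyCone hyC v
      fun i hi => hy hi v hvσ.1
    refine ⟨ε • v, hσ.mem_intrinsicInterior_iff.2 ⟨hσ.smul_mem hvσ.1 hε.le, fun i hi => ?_⟩, _,
      hyv, add_sub_cancel _ _⟩
    have hi' : ε * ℓ i v = 0 := by simpa [zeroIdx] using hi
    exact hvσ.2 ((mul_eq_zero.1 hi').resolve_left hε.ne')

end IsConeFace

variable [FiniteDimensional ℝ E] [Finite ι]

lemma intrinsicInterior_add_polyCone_anti (hσ : IsConeFace σ (polyCone ℓ))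
    (hψ : IsConeFace ψ (polyCone ℓ)) (h : σ ⊆ ψ) :
    intrinsicInterior ℝ ψ + polyCone ℓ ⊆ intrinsicInterior ℝ σ + polyCone ℓ := by
  intro y hy
  obtain ⟨hyC, hyψ⟩ := hψ.mem_intrinsicInterior_add_polyCone_iff.1 hy
  exact hσ.mem_intrinsicInterior_add_polyCone_iff.2 ⟨hyC, hyψ.trans (vanishingIdx_anti h)⟩

lemma finite_setOf_isConeFace : {σ : Set E | IsConeFace σ (polyCone ℓ)}.Finite :=
  (Set.finite_range (polyFace ℓ)).subset fun _ hσ => ⟨_, hσ.eq_polyFace.symm⟩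

end PolyCone

lemma exists_mem_forall_mem_of_add_mem {M κ : Type*} [AddCommMonoid M] [Finite κ] {τ : Set M}
    (h0 : (0 : M) ∈ τ) (hadd : ∀ x ∈ τ, ∀ y ∈ τ, x + y ∈ τ) (B : κ → Set M)
    (hB : ∀ k, ∀ x ∈ B k, ∀ y ∈ τ, x + y ∈ B k) :
    ∃ t ∈ τ, ∀ k, (∃ c ∈ τ, c ∈ B k) → t ∈ B k := by
  classical
  have := Fintype.ofFinite κ
  have hc (k : κ) : ∃ c ∈ τ, (∃ c ∈ τ, c ∈ B k) → c ∈ B k := by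
    by_cases h : ∃ c ∈ τ, c ∈ B k
    · obtain ⟨c, hc, hcB⟩ := h
      exact ⟨c, hc, fun _ => hcB⟩
    · exact ⟨0, h0, fun h' => absurd h' h⟩
  choose c hcτ hcB using hc
  have hsum (s : Finset κ) : ∑ k ∈ s, c k ∈ τ :=
    Finset.sum_induction _ (· ∈ τ) (fun x y hx hy => hadd x hx y hy) h0 fun k _ => hcτ k
  refine ⟨∑ k, c k, hsum _, fun k hk => ?_⟩
  rw [← Finset.add_sum_erase _ _ (Finset.mem_univ k)]
  exact hB k _ (hcB k hk) _ (hsum _)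

section Downset

variable {n : ℕ} {C D σ σ₀ ψ τ : Set (Fin n → ℝ)} {a x : Fin n → ℝ}

lemma IsDownset.upSet (hD : IsDownset C D) (σ : Set (Fin n → ℝ)) : IsDownset C (upSet D σ) :=
  fun _ _ hy hxy s hs => hD _ _ (hy s hs) (by rwa [sub_sub_sub_cancel_right])

lemma upSet_singleton_zero : upSet D {0} = D := by
  ext a
  simp [upSet, intrinsicInterior_singleton]

lemma add_smul_mem_upSet_of_forall_lt (h0 : (0 : Fin n → ℝ) ∈ σ) {v : Fin n → ℝ}
    (hv : v ∈ σ) {t₀ : ℝ} (h : ∀ t < t₀, a + t • v ∈ upSet D σ) :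
    a + t₀ • v ∈ upSet D σ := by
  intro s hs
  obtain ⟨ε, hε, hsε⟩ := exists_pos_sub_smul_mem_intrinsicInterior hs h0 hv
  convert h (t₀ - ε) (by linarith) _ hsε using 1
  rw [sub_smul]
  abel

lemma IsCogen.coprincipal_subset (hD : IsDownset C D) (h : IsCogen C D τ σ a) :
    {a} + τ - intrinsicInterior ℝ σ - C ⊆ D := by
  rintro _ ⟨_, ⟨_, ⟨b, hb, t, ht, rfl⟩, s, hs, rfl⟩, c, hc, rfl⟩
  rw [Set.mem_singleton_iff] at hb
  subst hb
  exact hD _ _ ((h.1.symm.subset ⟨_, rfl, t, ht, rfl⟩).2 s hs) (by rwa [sub_sub_cancel])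

def upDirs (C D σ : Set (Fin n → ℝ)) (a : Fin n → ℝ) : Set (Fin n → ℝ) :=
  {c ∈ C | a + c ∈ upSet D σ}

lemma upDirs_add_subset (hD : IsDownset C D) {w : Fin n → ℝ} (hw : w ∈ C) :
    upDirs C D σ (a + w) ⊆ upDirs C D σ a :=
  fun _ hc => ⟨hc.1, hD.upSet σ _ _ hc.2 (by rwa [add_right_comm, add_sub_cancel_left])⟩

lemma isConeFace_upDirs (hD : IsDownset C D) (h0 : (0 : Fin n → ℝ) ∈ C)
    (ha : a ∈ upSet D σ)
    (hadd : ∀ c ∈ upDirs C D σ a, ∀ c' ∈ upDirs C D σ a, c + c' ∈ upDirs C D σ a) :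
    IsConeFace (upDirs C D σ a) C := by
  refine ⟨fun c hc => hc.1, ⟨h0, by rwa [add_zero]⟩, hadd, fun c hc c' hc' hcc' =>
    ⟨⟨hc, hD.upSet σ _ _ hcc'.2 ?_⟩, ⟨hc', hD.upSet σ _ _ hcc'.2 ?_⟩⟩⟩
  · convert hc' using 1; abel
  · convert hc using 1; abel

variable {ι : Type*} {ℓ : ι → (Fin n → ℝ) →ₗ[ℝ] ℝ}

variable (ℓ) in
def zeroPatterns (D σ : Set (Fin n → ℝ)) (a : Fin n → ℝ) : Set (Set ι) :=
  zeroIdx ℓ '' upDirs (polyCone ℓ) D σ a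

variable [Finite ι]

lemma upSet_mono (hD : IsDownset (polyCone ℓ) D) (hσ : IsConeFace σ (polyCone ℓ))
    (hψ : IsConeFace ψ (polyCone ℓ)) (h : σ ⊆ ψ) : upSet D σ ⊆ upSet D ψ := by
  intro y hy s hs
  obtain ⟨s', hs', c, hc, rfl⟩ := intrinsicInterior_add_polyCone_anti hσ hψ h
    ⟨s, hs, 0, zero_mem_polyCone, add_zero s⟩
  exact hD _ _ (hy s' hs') (by rwa [sub_sub_sub_cancel_left, add_sub_cancel_left])

lemma exists_zeroPatterns_add_smul_ssubset (hD : IsDownset (polyCone ℓ) D)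
    (h0 : (0 : Fin n → ℝ) ∈ σ) {c₀ : Fin n → ℝ}
    (hc₀ : c₀ ∈ upDirs (polyCone ℓ) D σ a) (hc₀σ : c₀ ∈ σ) {t₀ : ℝ}
    (ht₀ : a + t₀ • c₀ ∉ upSet D σ) :
    ∃ t : ℝ, 0 ≤ t ∧ a + t • c₀ ∈ upSet D σ ∧
      zeroPatterns ℓ D σ (a + t • c₀) ⊂ zeroPatterns ℓ D σ a := by
  set T := {t : ℝ | a + t • c₀ ∈ upSet D σ}
  have hmono : ∀ t ∈ T, ∀ t' ≤ t, t' ∈ T := fun t ht t' htt' => hD.upSet σ _ _ ht (by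
    rw [add_sub_add_left_eq_sub, ← sub_smul]
    exact smul_mem_polyCone (sub_nonneg.2 htt') hc₀.1)
  have hbdd : BddAbove T :=
    ⟨t₀, fun t ht => not_lt.1 fun hlt => ht₀ (hmono t ht t₀ hlt.le)⟩
  have h1 : (1 : ℝ) ∈ T := by simpa [T] using hc₀.2
  have hsup : sSup T ∈ T := add_smul_mem_upSet_of_forall_lt h0 hc₀σ fun t ht => by
    obtain ⟨t', ht', htt'⟩ := exists_lt_of_lt_csSup ⟨1, h1⟩ ht
    exact hmono t' ht' t htt'.le
  have hts : 0 ≤ sSup T := zero_le_one.trans (le_csSup hbdd h1)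
  refine ⟨sSup T, hts, hsup, (Set.ssubset_iff_of_subset (Set.image_mono <|
    upDirs_add_subset hD (smul_mem_polyCone hts hc₀.1))).2 ⟨_, ⟨c₀, hc₀, rfl⟩, ?_⟩⟩
  -- a direction with the zero pattern of `c₀` dominates some `ε • c₀`, pushing past `sSup T`
  rintro ⟨c, hc, hcc₀⟩
  obtain ⟨ε, hε, hcε⟩ := exists_pos_sub_smul_mem_polyCone hc.1 c₀ hcc₀.subset
  have : sSup T + ε ∈ T := hD.upSet σ _ _ hc.2 (by convert hcε using 1; rw [add_smul]; abel)
  linarith [le_csSup hbdd this]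

lemma zeroPatterns_add_ssubset (hD : IsDownset (polyCone ℓ) D)
    (hray : ∀ c ∈ upDirs (polyCone ℓ) D σ a, ∀ t : ℝ, a + t • c ∈ upSet D σ)
    {c c' : Fin n → ℝ} (hc : c ∈ upDirs (polyCone ℓ) D σ a)
    (hc' : c' ∈ upDirs (polyCone ℓ) D σ a) (hcc' : c + c' ∉ upDirs (polyCone ℓ) D σ a) :
    zeroPatterns ℓ D σ (a + c) ⊂ zeroPatterns ℓ D σ a := by
  refine (Set.ssubset_iff_of_subset (Set.image_mono (upDirs_add_subset hD hc.1))).2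
    ⟨_, ⟨c', hc', rfl⟩, ?_⟩
  rintro ⟨d, hd, hdc'⟩
  have hcd : c + d ∈ upDirs (polyCone ℓ) D σ a :=
    ⟨add_mem_polyCone hc.1 hd.1, by rw [← add_assoc]; exact hd.2⟩
  obtain ⟨t, ht⟩ := exists_smul_sub_mem_polyCone hcd.1 (d := c + c') (by
    rw [zeroIdx_add hc.1 hd.1, zeroIdx_add hc.1 hc'.1, hdc'])
  exact hcc' ⟨add_mem_polyCone hc.1 hc'.1,
    hD.upSet σ _ _ (hray _ hcd t) (by rwa [add_sub_add_left_eq_sub])⟩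

lemma exists_zeroPatterns_ssubset (hD : IsDownset (polyCone ℓ) D)
    (h0 : (0 : Fin n → ℝ) ∈ σ) (ha : a ∈ upSet D σ) (hσ : upDirs (polyCone ℓ) D σ a ⊆ σ)
    (hnf : ¬ IsConeFace (upDirs (polyCone ℓ) D σ a) (polyCone ℓ)) :
    ∃ w ∈ polyCone ℓ, a + w ∈ upSet D σ ∧
      zeroPatterns ℓ D σ (a + w) ⊂ zeroPatterns ℓ D σ a := by
  by_cases hray : ∃ c ∈ upDirs (polyCone ℓ) D σ a, ∃ t : ℝ, a + t • c ∉ upSet D σ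
  · obtain ⟨c, hc, t, ht⟩ := hray
    obtain ⟨t', ht', h⟩ := exists_zeroPatterns_add_smul_ssubset hD h0 hc (hσ hc) ht
    exact ⟨t' • c, smul_mem_polyCone ht' hc.1, h⟩
  · push Not at hray
    obtain ⟨c, hc, c', hc', hcc'⟩ : ∃ c ∈ upDirs (polyCone ℓ) D σ a,
        ∃ c' ∈ upDirs (polyCone ℓ) D σ a, c + c' ∉ upDirs (polyCone ℓ) D σ a := by
      by_contra! hadd
      exact hnf (isConeFace_upDirs hD zero_mem_polyCone ha hadd)
    exact ⟨c, hc.1, hc.2, zeroPatterns_add_ssubset hD hray hc hc' hcc'⟩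

lemma exists_isConeFace_upDirs (hD : IsDownset (polyCone ℓ) D) (h0 : (0 : Fin n → ℝ) ∈ σ)
    (ha : a ∈ upSet D σ) (hσ : upDirs (polyCone ℓ) D σ a ⊆ σ) :
    ∃ w ∈ polyCone ℓ, a + w ∈ upSet D σ ∧
      IsConeFace (upDirs (polyCone ℓ) D σ (a + w)) (polyCone ℓ) := by
  induction hk : (zeroPatterns ℓ D σ a).ncard using Nat.strong_induction_on generalizing a with
  | _ k ih =>
  by_cases hface : IsConeFace (upDirs (polyCone ℓ) D σ a) (polyCone ℓ)
  · exact ⟨0, zero_mem_polyCone, by rwa [add_zero], by rwa [add_zero]⟩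
  obtain ⟨w, hw, haw, hlt⟩ := exists_zeroPatterns_ssubset hD h0 ha hσ hface
  obtain ⟨w', hw', haww', hface'⟩ := ih _ (hk ▸ Set.ncard_lt_ncard hlt (Set.toFinite _)) haw
    ((upDirs_add_subset hD hw).trans hσ) rfl
  exact ⟨w + w', add_mem_polyCone hw hw', by rwa [← add_assoc], by rwa [← add_assoc]⟩

lemma upDirs_subset_of_maximal (hD : IsDownset (polyCone ℓ) D)
    (hmax : Maximal (fun σ => IsConeFace σ (polyCone ℓ) ∧
      ∃ a ∈ upSet D σ, a - x ∈ intrinsicInterior ℝ σ + polyCone ℓ) σ)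
    (ha : a - x ∈ intrinsicInterior ℝ σ + polyCone ℓ) :
    upDirs (polyCone ℓ) D σ a ⊆ σ := by
  intro c hc
  have hσ := hmax.1.1
  obtain ⟨hax, hzero⟩ := hσ.mem_intrinsicInterior_add_polyCone_iff.1 ha
  have hy : a + c - x = (a - x) + c := by abel
  have hyC : a + c - x ∈ polyCone ℓ := hy ▸ add_mem_polyCone hax hc.1
  have hzy : zeroIdx ℓ (a + c - x) = zeroIdx ℓ (a - x) ∩ zeroIdx ℓ c := by
    rw [hy, zeroIdx_add hax hc.1]
  set ψ := polyFace ℓ (zeroIdx ℓ (a + c - x))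
  have hψ : IsConeFace ψ (polyCone ℓ) := isConeFace_polyFace _
  have hσψ : σ ⊆ ψ := fun s hs => ⟨hσ.1 hs, fun i hi => hzero (hzy ▸ hi).1 s hs⟩
  have hψσ : ψ ⊆ σ := hmax.2 ⟨hψ, a + c, upSet_mono hD hσ hψ hσψ hc.2,
    hψ.mem_intrinsicInterior_add_polyCone_iff.2 ⟨hyC, subset_vanishingIdx_polyFace _⟩⟩ hσψ
  exact hψσ ⟨hc.1, fun i hi => (hzy ▸ hi).2⟩

lemma exists_isCogen_of_isConeFace_upDirs (hD : IsDownset (polyCone ℓ) D)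
    (hσ₀ : IsConeFace σ₀ (polyCone ℓ))
    (hτ : IsConeFace (upDirs (polyCone ℓ) D σ₀ a) (polyCone ℓ))
    (hτσ₀ : upDirs (polyCone ℓ) D σ₀ a ⊆ σ₀) :
    ∃ σ t, IsConeFace σ (polyCone ℓ) ∧ upDirs (polyCone ℓ) D σ₀ a ⊆ σ ∧ σ ⊆ σ₀ ∧
      t ∈ upDirs (polyCone ℓ) D σ₀ a ∧
      IsCogen (polyCone ℓ) D (upDirs (polyCone ℓ) D σ₀ a) σ (a + t) := by
  set τ := upDirs (polyCone ℓ) D σ₀ a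
  have hfin : {σ | IsConeFace σ (polyCone ℓ) ∧ τ ⊆ σ ∧ σ ⊆ σ₀ ∧
      ∀ c ∈ τ, a + c ∈ upSet D σ}.Finite :=
    finite_setOf_isConeFace.subset fun _ hσ => hσ.1
  obtain ⟨σ, ⟨hσ, hτσ, hσσ₀, haσ⟩, hmin⟩ :=
    hfin.exists_minimal ⟨σ₀, hσ₀, hτσ₀, subset_rfl, fun c hc => hc.2⟩
  obtain ⟨t, ht, hcert⟩ := exists_mem_forall_mem_of_add_mem hτ.2.1 hτ.2.2.1
    (fun J : Set ι => {c | a + c ∉ upSet D (polyFace ℓ J)})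
    fun J c hc c' hc' hcc' => hc (hD.upSet _ _ _ hcc' (by convert hτ.1 hc' using 1; abel))
  refine ⟨σ, t, hσ, hτσ, hσσ₀, ht, ?_, fun σ'' hσ'' hτσ'' hσ''σ hat => ?_⟩
  · ext y
    constructor
    · rintro ⟨⟨_, rfl, c, hc, rfl⟩, hy⟩
      have htc : t + c ∈ τ := ⟨add_mem_polyCone (hτ.1 ht) hc,
        by rw [← add_assoc]; exact upSet_mono hD hσ hσ₀ hσσ₀ hy⟩
      exact ⟨_, rfl, c, (hτ.2.2.2 _ (hτ.1 ht) _ hc htc).2, rfl⟩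
    · rintro ⟨_, rfl, c, hc, rfl⟩
      refine ⟨⟨_, rfl, c, hτ.1 hc, rfl⟩, ?_⟩
      show a + t + c ∈ upSet D σ
      rw [add_assoc]
      exact haσ _ (hτ.2.2.1 _ ht _ hc)
  · obtain ⟨c, hc, hac⟩ : ∃ c ∈ τ, a + c ∉ upSet D σ'' := by
      by_contra! hgood
      exact hσ''σ.2 (hmin ⟨hσ'', hτσ'', hσ''σ.1.trans hσσ₀, hgood⟩ hσ''σ.1)
    have := hcert (vanishingIdx ℓ σ'') ⟨c, hc, by rwa [← hσ''.eq_polyFace]⟩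
    rw [Set.mem_ofPred_eq, ← hσ''.eq_polyFace] at this
    exact this hat

theorem exists_isCogen_mem (hpointed : polyCone ℓ ∩ -polyCone ℓ = {0})
    (hD : IsDownset (polyCone ℓ) D) (hx : x ∈ D) :
    ∃ τ σ a, IsConeFace τ (polyCone ℓ) ∧ IsConeFace σ (polyCone ℓ) ∧ τ ⊆ σ ∧
      IsCogen (polyCone ℓ) D τ σ a ∧
      x ∈ {a} + τ - intrinsicInterior ℝ σ - polyCone ℓ := by
  have hfin : {σ | IsConeFace σ (polyCone ℓ) ∧
      ∃ a ∈ upSet D σ, a - x ∈ intrinsicInterior ℝ σ + polyCone ℓ}.Finite :=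
    finite_setOf_isConeFace.subset fun _ hσ => hσ.1
  obtain ⟨σ₀, hmax⟩ := hfin.exists_maximal ⟨{0}, isConeFace_singleton_zero hpointed, x,
    by rwa [upSet_singleton_zero], 0, by simp [intrinsicInterior_singleton], 0,
    zero_mem_polyCone, by simp⟩
  obtain ⟨hσ₀, a₀, ha₀, ha₀x⟩ := hmax.1
  have hτσ₀ := upDirs_subset_of_maximal hD hmax ha₀x
  obtain ⟨w, hw, -, hτ⟩ := exists_isConeFace_upDirs hD hσ₀.2.1 ha₀ hτσ₀
  obtain ⟨σ, t, hσ, hτσ, hσσ₀, ht, hcog⟩ :=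
    exists_isCogen_of_isConeFace_upDirs hD hσ₀ hτ ((upDirs_add_subset hD hw).trans hτσ₀)
  refine ⟨_, σ, _, hτ, hσ, hτσ, hcog, ?_⟩
  obtain ⟨s₀, hs₀, c₀, hc₀, hsc₀⟩ := Set.mem_add.1 ha₀x
  have hax : a₀ + w + t - x ∈ intrinsicInterior ℝ σ₀ + polyCone ℓ :=
    Set.mem_add.2 ⟨s₀, hs₀, c₀ + (w + t),
      add_mem_polyCone hc₀ (add_mem_polyCone hw (hτ.1 ht)), by rw [← add_assoc, hsc₀]; abel⟩
  obtain ⟨s, hs, c, hc, hsc⟩ :=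
    Set.mem_add.1 (intrinsicInterior_add_polyCone_anti hσ hσ₀ hσσ₀ hax)
  refine Set.mem_sub.2 ⟨_, Set.mem_sub.2
    ⟨_, Set.mem_add.2 ⟨_, rfl, 0, hτ.2.1, rfl⟩, s, hs, rfl⟩, c, hc, ?_⟩
  rw [add_zero, sub_sub, hsc, sub_sub_cancel]

end Downset

theorem downset_eq_union_coprincipal_general {n : ℕ} (C D : Set (Fin n → ℝ))
    (hC : IsPolyCone C) (hpointed : C ∩ (-C) = {0})
    (hD : IsDownset C D) :
    D = ⋃ (τ : Set (Fin n → ℝ)) (σ : Set (Fin n → ℝ)) (a : Fin n → ℝ)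
          (_ : IsConeFace τ C ∧ IsConeFace σ C ∧ τ ⊆ σ ∧ IsCogen C D τ σ a),
          ({a} + τ - intrinsicInterior ℝ σ - C) := by
  obtain ⟨m, ℓ, rfl⟩ := hC
  refine subset_antisymm (fun x hx => ?_) (Set.iUnion_subset fun τ => Set.iUnion_subset fun σ =>
    Set.iUnion_subset fun a => Set.iUnion_subset fun h => h.2.2.2.coprincipal_subset hD)
  obtain ⟨τ, σ, a, hτ, hσ, hτσ, hcog, hxa⟩ :=
    exists_isCogen_mem (ℓ := ℓ) hpointed hD hx
  exact Set.mem_iUnion₂.2 ⟨τ, σ, Set.mem_iUnion₂.2 ⟨a, ⟨hτ, hσ, hτσ, hcog⟩, hxa⟩⟩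

/-- Every downset is the union of the coprincipal downsets
`a + τ - σ° - C` over all of its cogenerators. -/
theorem downset_eq_union_coprincipal {n : ℕ} (C D : Set (Fin n → ℝ))
    (hC : IsPolyCone C) (hpointed : C ∩ (-C) = {0}) (hspan : C - C = Set.univ)
    (hD : IsDownset C D) :
    D = ⋃ (τ : Set (Fin n → ℝ)) (σ : Set (Fin n → ℝ)) (a : Fin n → ℝ)
          (_ : IsConeFace τ C ∧ IsConeFace σ C ∧ τ ⊆ σ ∧ IsCogen C D τ σ a),
          ({a} + τ - intrinsicInterior ℝ σ - C) :=
  downset_eq_union_coprincipal_general C D hC hpointed hD
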